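/- arXiv:1710.01284 — 3 statements merged into one kernel-verified Lean document; each statement's English description precedes it below -/
import Mathlib

section
/- For a formal system S, A ⊆ X, and a ∈ X: a is S-paradeductible from A (A ⊢ᴾ_S a) if and only if there exists an S-consistent subset A' ⊆ A with A' ⊢_S a. -/
/-- A formal system: a set of axioms and a family of finitary inference rules
on the set `X` of formulas.  A rule `(P, x)` allows inferring `x` from the
(finite, nonempty) set of premises `P`. -/
structure FormalSystem (X : Type) where
  axioms : Set X
  rules : Set (Set X × X)
  finitary : ∀ r ∈ rules, r.1.Finite ∧ r.1.Nonempty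

/-- `d : Fin n → X` is an `S`-deduction from `A`: each entry is a member of `A`,
an axiom, or an immediate consequence of earlier entries by a rule. -/
def IsDeduction {X : Type} (S : FormalSystem X) (A : Set X)
    {n : ℕ} (d : Fin n → X) : Prop :=
  ∀ i : Fin n, d i ∈ A ∨ d i ∈ S.axioms ∨
    ∃ r ∈ S.rules, r.2 = d i ∧
      ∃ f : X → Fin n, ∀ p ∈ r.1, f p < i ∧ d (f p) = p

/-- `a` is `S`-deducible from `A`. -/
def Der {X : Type} (S : FormalSystem X) (A : Set X) (a : X) : Prop :=
  ∃ (n : ℕ) (d : Fin n → X) (h : 0 < n),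
    IsDeduction S A d ∧ d ⟨n - 1, by omega⟩ = a

/-- `A` is `S`-consistent. -/
def Consistent {X : Type} (S : FormalSystem X) (A : Set X) : Prop :=
  {a | Der S A a} ≠ Set.univ

/-- `σ : Fin n → Set X × X` is a paradeduction in `S` from `A`: every attached
set is `S`-consistent, and each pair `(Aᵢ, aᵢ)` satisfies: `aᵢ ∈ A` and
`Aᵢ = {aᵢ}`; or `aᵢ` is an axiom and `Aᵢ = ∅`; or `aᵢ` follows from preceding
formulas by a rule and `Aᵢ` is the union of their attached sets. -/
def IsParaDeduction {X : Type} (S : FormalSystem X) (A : Set X)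
    {n : ℕ} (σ : Fin n → Set X × X) : Prop :=
  ∀ i : Fin n, Consistent S (σ i).1 ∧
    (((σ i).2 ∈ A ∧ (σ i).1 = {(σ i).2}) ∨
     ((σ i).2 ∈ S.axioms ∧ (σ i).1 = ∅) ∨
     (∃ r ∈ S.rules, r.2 = (σ i).2 ∧
        ∃ f : X → Fin n, (∀ p ∈ r.1, f p < i ∧ (σ (f p)).2 = p) ∧
          (σ i).1 = ⋃ p ∈ r.1, (σ (f p)).1))

/-- `a` is `S`-paradeductible from `A`. -/
def ParaDer {X : Type} (S : FormalSystem X) (A : Set X) (a : X) : Prop :=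
  ∃ (n : ℕ) (σ : Fin n → Set X × X) (h : 0 < n),
    IsParaDeduction S A σ ∧ (σ ⟨n - 1, by omega⟩).2 = a

/-!
Every entry of a paradeduction is deducible from its attached set, by strong induction along the
sequence; the last attached set is thus a consistent subset of `A` deducing `a`. Conversely, a
deduction from a consistent `A' ⊆ A` becomes a paradeduction once each entry is given, by
well-founded recursion, the set of members of `A'` its justification draws on: these sets lie in
`A'` and so are consistent.
-/

theorem WellFoundedLT.exists_fix {α β : Type*} [LT α] [WellFoundedLT α]
    (P : (a : α) → ((b : α) → b < a → β) → β → Prop) (h : ∀ a g, ∃ x, P a g x) :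
    ∃ F : α → β, ∀ a, P a (fun b _ => F b) (F a) := by
  choose c hc using h
  refine ⟨wellFounded_lt.fix c, fun a => ?_⟩
  rw [WellFounded.fix_eq]
  exact hc a _

section Deduction

variable {X : Type} {S : FormalSystem X} {A B : Set X}

def Justified (S : FormalSystem X) (A : Set X) {n : ℕ} (d : Fin n → X) (i : Fin n) : Prop :=
  d i ∈ A ∨ d i ∈ S.axioms ∨
    ∃ r ∈ S.rules, r.2 = d i ∧ ∃ f : X → Fin n, ∀ p ∈ r.1, f p < i ∧ d (f p) = p

theorem IsDeduction.justified_embedding {m n : ℕ} {d : Fin m → X} {d' : Fin n → X}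
    (hd : IsDeduction S A d) (e : Fin m ↪o Fin n) (he : ∀ j, d' (e j) = d j) (i : Fin m) :
    Justified S A d' (e i) := by
  rw [Justified, he]
  rcases hd i with hA | hax | ⟨r, hr, hr2, f, hf⟩
  · exact Or.inl hA
  · exact Or.inr (Or.inl hax)
  · refine Or.inr (Or.inr ⟨r, hr, hr2, e ∘ f, fun p hp => ?_⟩)
    exact ⟨e.lt_iff_lt.mpr (hf p hp).1, (he _).trans (hf p hp).2⟩

theorem IsDeduction.mono (hAB : A ⊆ B) {n : ℕ} {d : Fin n → X} (hd : IsDeduction S A d) :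
    IsDeduction S B d :=
  fun i => (hd i).imp_left (@hAB _)

theorem IsDeduction.append {m n : ℕ} {d₁ : Fin m → X} {d₂ : Fin n → X}
    (h₁ : IsDeduction S A d₁) (h₂ : IsDeduction S A d₂) :
    IsDeduction S A (Fin.append d₁ d₂) := by
  intro i
  induction i using Fin.addCases with
  | left j => exact h₁.justified_embedding (Fin.castAddOrderEmb n) (Fin.append_left d₁ d₂) j
  | right j => exact h₂.justified_embedding (Fin.natAddOrderEmb m) (Fin.append_right d₁ d₂) j

theorem IsDeduction.snoc_of_rule {n : ℕ} {d : Fin n → X} (hd : IsDeduction S A d)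
    {r : Set X × X} (hr : r ∈ S.rules) (hprem : ∀ p ∈ r.1, ∃ i, d i = p) :
    IsDeduction S A (Fin.snoc (α := fun _ => X) d r.2) := by
  intro i
  induction i using Fin.lastCases with
  | last =>
    classical
    choose g hg using hprem
    refine Or.inr (Or.inr ⟨r, hr, (Fin.snoc_last (α := fun _ => X) _ _).symm,
      fun p => if hp : p ∈ r.1 then (g p hp).castSucc else Fin.last n, fun p hp => ?_⟩)
    simp only [dif_pos hp]
    exact ⟨Fin.castSucc_lt_last _, (Fin.snoc_castSucc _ _ _).trans (hg p hp)⟩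
  | cast j => exact hd.justified_embedding Fin.castSuccOrderEmb (Fin.snoc_castSucc _ _) j

theorem exists_isDeduction_forall_mem {P : Set X} (hP : P.Finite) (h : ∀ p ∈ P, Der S A p) :
    ∃ (n : ℕ) (d : Fin n → X), IsDeduction S A d ∧ ∀ p ∈ P, ∃ i, d i = p := by
  induction P, hP using Set.Finite.induction_on with
  | empty => exact ⟨0, Fin.elim0, fun i => i.elim0, fun p hp => hp.elim⟩
  | @insert b P _ _ ih =>
    obtain ⟨n, d, hd, hcov⟩ := ih fun p hp => h p (Set.mem_insert_of_mem b hp)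
    obtain ⟨m, e, hm, he, he_last⟩ := h b (Set.mem_insert b P)
    refine ⟨n + m, Fin.append d e, hd.append he, ?_⟩
    rintro p (rfl | hp)
    · exact ⟨Fin.natAdd n ⟨m - 1, by omega⟩, (Fin.append_right d e _).trans he_last⟩
    · obtain ⟨i, rfl⟩ := hcov p hp
      exact ⟨Fin.castAdd m i, Fin.append_left d e i⟩

theorem Der.mono (hAB : A ⊆ B) {a : X} (h : Der S A a) : Der S B a :=
  let ⟨n, d, hn, hd, hlast⟩ := h
  ⟨n, d, hn, hd.mono hAB, hlast⟩

theorem der_of_mem {a : X} (ha : a ∈ A) : Der S A a :=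
  ⟨1, fun _ => a, one_pos, fun _ => Or.inl ha, rfl⟩

theorem der_of_mem_axioms {a : X} (ha : a ∈ S.axioms) : Der S A a :=
  ⟨1, fun _ => a, one_pos, fun _ => Or.inr (Or.inl ha), rfl⟩

theorem der_of_rule {r : Set X × X} (hr : r ∈ S.rules) (h : ∀ p ∈ r.1, Der S A p) :
    Der S A r.2 := by
  obtain ⟨n, d, hd, hprem⟩ := exists_isDeduction_forall_mem (S.finitary r hr).1 h
  exact ⟨n + 1, _, n.succ_pos, hd.snoc_of_rule hr hprem, Fin.snoc_last _ _⟩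

theorem Consistent.mono (hAB : A ⊆ B) (hB : Consistent S B) : Consistent S A := by
  refine fun hA => hB (Set.eq_univ_of_forall fun a => ?_)
  exact (Set.eq_univ_iff_forall.mp hA a).mono hAB

end Deduction

section ParaDeduction

variable {X : Type} {S : FormalSystem X} {A : Set X}

theorem IsParaDeduction.subset_and_der {n : ℕ} {σ : Fin n → Set X × X}
    (hσ : IsParaDeduction S A σ) (i : Fin n) : (σ i).1 ⊆ A ∧ Der S (σ i).1 (σ i).2 := by
  induction i using WellFoundedLT.induction with
  | _ i ih =>
  rcases (hσ i).2 with ⟨ha, hAi⟩ | ⟨hax, hAi⟩ | ⟨r, hr, hr2, f, hf, hAi⟩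
  · rw [hAi]
    exact ⟨Set.singleton_subset_iff.mpr ha, der_of_mem rfl⟩
  · rw [hAi]
    exact ⟨Set.empty_subset A, der_of_mem_axioms hax⟩
  · have hsub : ∀ p ∈ r.1, (σ (f p)).1 ⊆ (σ i).1 := fun p hp =>
      hAi ▸ Set.subset_biUnion_of_mem (u := fun p => (σ (f p)).1) hp
    refine ⟨hAi ▸ Set.iUnion₂_subset fun p hp => (ih _ (hf p hp).1).1,
      hr2 ▸ der_of_rule hr fun p hp => ?_⟩
    rw [← (hf p hp).2]
    exact (ih _ (hf p hp).1).2.mono (hsub p hp)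

theorem IsDeduction.exists_isParaDeduction {A' : Set X} (hA' : A' ⊆ A) (hc : Consistent S A')
    {n : ℕ} {d : Fin n → X} (hd : IsDeduction S A' d) :
    ∃ B : Fin n → Set X, IsParaDeduction S A fun i => (B i, d i) := by
  obtain ⟨B, hB⟩ := WellFoundedLT.exists_fix
    (fun i (g : ∀ j < i, Set X) (x : Set X) => d i ∈ A' ∧ x = {d i} ∨ d i ∈ S.axioms ∧ x = ∅ ∨
      ∃ r ∈ S.rules, r.2 = d i ∧ ∃ (f : X → Fin n) (hf : ∀ p ∈ r.1, f p < i ∧ d (f p) = p),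
        x = ⋃ (p) (hp : p ∈ r.1), g (f p) (hf p hp).1)
    fun i g => by
      rcases hd i with ha | hax | ⟨r, hr, hr2, f, hf⟩
      · exact ⟨_, Or.inl ⟨ha, rfl⟩⟩
      · exact ⟨_, Or.inr (Or.inl ⟨hax, rfl⟩)⟩
      · exact ⟨_, Or.inr (Or.inr ⟨r, hr, hr2, f, hf, rfl⟩)⟩
  have hBA' : ∀ i, B i ⊆ A' := by
    intro i
    induction i using WellFoundedLT.induction with
    | _ i ih =>
    rcases hB i with ⟨ha, hBi⟩ | ⟨-, hBi⟩ | ⟨r, -, -, f, hf, hBi⟩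
    · exact hBi ▸ Set.singleton_subset_iff.mpr ha
    · exact hBi ▸ Set.empty_subset A'
    · exact hBi ▸ Set.iUnion₂_subset fun p hp => ih _ (hf p hp).1
  refine ⟨B, fun i => ⟨hc.mono (hBA' i), ?_⟩⟩
  rcases hB i with ⟨ha, hBi⟩ | hax | ⟨r, hr, hr2, f, hf, hBi⟩
  · exact Or.inl ⟨hA' ha, hBi⟩
  · exact Or.inr (Or.inl hax)
  · exact Or.inr (Or.inr ⟨r, hr, hr2, f, hf, hBi⟩)

end ParaDeduction

/-- `A ⊢ᴾ_S a` iff there is an `S`-consistent subset `A' ⊆ A` with `A' ⊢_S a`. -/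
theorem stmt_4 {X : Type} (S : FormalSystem X) (A : Set X) (a : X) :
    ParaDer S A a ↔ ∃ A' ⊆ A, Consistent S A' ∧ Der S A' a := by
  constructor
  · rintro ⟨n, σ, hn, hσ, rfl⟩
    obtain ⟨hsub, hder⟩ := hσ.subset_and_der ⟨n - 1, by omega⟩
    exact ⟨_, hsub, (hσ _).1, hder⟩
  · rintro ⟨A', hA', hc, n, d, hn, hd, hlast⟩
    obtain ⟨B, hB⟩ := hd.exists_isParaDeduction hA' hc
    exact ⟨n, _, hn, hB, hlast⟩
end

section
/- If (X, 𝒱) is adequate for S, then the paraconsistentized relations coincide: for all A ⊆ X and a ∈ X, A ⊢ᴾ_S a if and only if A ⊨ᴾ_𝒱 a (soundness and completeness are invariant under paraconsistentization). -/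
/-- The set of `𝒱`-models of `A`. -/
def Models {X : Type} (V : Set (X → Bool)) (A : Set X) : Set (X → Bool) :=
  {v ∈ V | ∀ a ∈ A, v a = true}

/-- `A ⊨_𝒱 a`. -/
def SemCons {X : Type} (V : Set (X → Bool)) (A : Set X) (a : X) : Prop :=
  Models V A ⊆ Models V {a}

/-- `A` is `𝒱`-satisfiable. -/
def Sat {X : Type} (V : Set (X → Bool)) (A : Set X) : Prop :=
  Models V A ≠ ∅

/-- `A ⊨ᴾ_𝒱 a`: 𝒱-paraconsequence. -/
def ParaSemCons {X : Type} (V : Set (X → Bool)) (A : Set X) (a : X) : Prop :=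
  ∃ A' ⊆ A, Sat V A' ∧ SemCons V A' a

/-- If `(X,𝒱)` is adequate for `S`, then the paraconsistentized relations
coincide: `A ⊢ᴾ_S a ↔ A ⊨ᴾ_𝒱 a`. -/
theorem stmt_7 {X : Type} (V : Set (X → Bool)) (Der : Set X → X → Prop)
    (hV : (fun _ => true) ∉ V)
    (hadeq : ∀ (A : Set X) (a : X), Der A a ↔ SemCons V A a) :
    ∀ (A : Set X) (a : X),
      (∃ A' ⊆ A, {b | Der A' b} ≠ Set.univ ∧ Der A' a) ↔ ParaSemCons V A a := by
  have key : ∀ A' : Set X, ({b | Der A' b} ≠ Set.univ ↔ Sat V A') := by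
    intro A'
    constructor
    · intro h
      intro hempty
      apply h
      ext b
      simp only [Set.mem_setOf_eq, Set.mem_univ, iff_true, hadeq]
      intro v hv
      exact absurd (Set.eq_empty_iff_forall_notMem.mp hempty v hv) (fun h => h.elim)
    · intro hsat heq
      obtain ⟨v, hv⟩ := Set.nonempty_iff_ne_empty.mpr hsat
      have hvne : v ≠ fun _ => true := fun h => hV (h ▸ hv.1)
      obtain ⟨b, hb⟩ : ∃ b, v b ≠ true := by
        by_contra h
        push_neg at h
        exact hvne (funext h)
      have : Der A' b := Set.eq_univ_iff_forall.mp heq b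
      have := (hadeq A' b).mp this hv
      exact hb (this.2 b rfl)
  intro A a
  constructor
  · rintro ⟨A', hsub, hcons, hder⟩
    exact ⟨A', hsub, (key A').mp hcons, (hadeq A' a).mp hder⟩
  · rintro ⟨A', hsub, hsat, hsem⟩
    exact ⟨A', hsub, (key A').mpr hsat, (hadeq A' a).mpr hsem⟩
end

section
/- Every S-deduction of a from an S-consistent set A' can be converted into a paradeduction in S from any A ⊇ A' ending in a. -/
open Classical in
noncomputable def Aset {X : Type} (S : FormalSystem X) (A' : Set X) {n : ℕ}
    (d : Fin n → X) (i : Fin n) : Set X :=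
  if d i ∈ A' then {d i}
  else if d i ∈ S.axioms then ∅
  else if h : ∃ r ∈ S.rules, r.2 = d i ∧ ∃ f : X → Fin n, ∀ p ∈ r.1, f p < i ∧ d (f p) = p then
    ⋃ p ∈ h.choose.1, Aset S A' d (h.choose_spec.2.2.choose p)
  else ∅
termination_by i.val
decreasing_by exact (h.choose_spec.2.2.choose_spec p ‹p ∈ h.choose.1›).1

theorem Aset_subset {X : Type} (S : FormalSystem X) (A' : Set X) {n : ℕ}
    (d : Fin n → X) (i : Fin n) : Aset S A' d i ⊆ A' := by
  unfold Aset
  split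
  · next hmem => intro x hx; simp at hx; subst hx; exact hmem
  · split
    · simp
    · split
      · next hex =>
        intro x hx
        simp only [Set.mem_iUnion] at hx
        obtain ⟨p, hp, hx⟩ := hx
        exact Aset_subset S A' d _ hx
      · simp
termination_by i.val
decreasing_by
  rename_i ih hA hax hex hxu hpe
  exact (hex.choose_spec.2.2.choose_spec p hp).1

theorem der_mono {X : Type} (S : FormalSystem X) {B C : Set X} (hBC : B ⊆ C)
    {a : X} (h : Der S B a) : Der S C a := by
  obtain ⟨n, d, hn, hded, hlast⟩ := h
  exact ⟨n, d, hn, fun i => (hded i).imp (fun h => hBC h) id, hlast⟩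

theorem consistent_mono {X : Type} (S : FormalSystem X) {B C : Set X} (hBC : B ⊆ C)
    (h : Consistent S C) : Consistent S B := by
  intro hB
  apply h
  ext x
  simp only [Set.mem_univ, iff_true]
  have : x ∈ {a | Der S B a} := by rw [hB]; trivial
  exact der_mono S hBC this

/-- Every `S`-deduction of `a` from an `S`-consistent set `A'` can be converted
into a paradeduction in `S` from any `A ⊇ A'` ending in `a`. -/
theorem stmt_19 {X : Type} (S : FormalSystem X) (A A' : Set X) (a : X)
    (hsub : A' ⊆ A) (hcons : Consistent S A')
    {n : ℕ} (hn : 0 < n) (d : Fin n → X)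
    (hd : IsDeduction S A' d) (hlast : d ⟨n - 1, by omega⟩ = a) :
    ∃ (m : ℕ) (σ : Fin m → Set X × X) (hm : 0 < m),
      IsParaDeduction S A σ ∧ (σ ⟨m - 1, by omega⟩).2 = a := by
  classical
  refine ⟨n, fun i => (Aset S A' d i, d i), hn, ?_, hlast⟩
  intro i
  refine ⟨consistent_mono S (Aset_subset S A' d i) hcons, ?_⟩
  by_cases h1 : d i ∈ A'
  · left
    exact ⟨hsub h1, by show Aset S A' d i = _; unfold Aset; rw [if_pos h1]⟩
  · by_cases h2 : d i ∈ S.axioms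
    · right; left
      exact ⟨h2, by show Aset S A' d i = _; unfold Aset; rw [if_neg h1, if_pos h2]⟩
    · right; right
      have hex : ∃ r ∈ S.rules, r.2 = d i ∧
          ∃ f : X → Fin n, ∀ p ∈ r.1, f p < i ∧ d (f p) = p := by
        rcases hd i with h | h | h
        · exact absurd h h1
        · exact absurd h h2
        · exact h
      refine ⟨hex.choose, hex.choose_spec.1, hex.choose_spec.2.1,
        hex.choose_spec.2.2.choose, ?_, ?_⟩
      · exact fun p hp => hex.choose_spec.2.2.choose_spec p hp
      · show Aset S A' d i = _
        conv_lhs => unfold Aset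
        rw [if_neg h1, if_neg h2, dif_pos hex]
end
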